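/- The Korteweg stress tensor K = (ρ div(K(ρ)∇ρ) + ½(K(ρ) − ρK'(ρ))|∇ρ|²) I − K(ρ) ∇ρ ⊗ ∇ρ satisfies, for smooth ρ > 0, the identity div(K) = ρ ∇(√(K(ρ)) Δ(G(ρ))), where G(r) = ∫₀^r √(K(s)) ds; equivalently div(K) = ρ∇(K(ρ)Δρ + ½K'(ρ)|∇ρ|²). -/

import Mathlib

/-!
Write `a = K(ρ)`, `b = K'(ρ)`, `W = |∇ρ|²` and `F = aΔρ + ½bW`. Since `div(a∇ρ) = aΔρ + bW`,
the diagonal coefficient of the tensor is `ρF + ½aW`, so its `i`-th row divergence is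
`∂ᵢ(ρF + ½aW) - Σⱼ ∂ⱼ(a ∂ᵢρ ∂ⱼρ)`. By `∇a = b∇ρ` and the symmetry of second derivatives the
sum equals `∂ᵢρ (aΔρ + bW) + ½a ∂ᵢW`, and everything except `ρ ∂ᵢF` cancels.
For the first form, the chain rule gives `Δ(G(ρ)) = G'(ρ)Δρ + G''(ρ)W` with `G' = √K` and
`G'' = K'/(2√K)`, so `√K(ρ) Δ(G(ρ)) = F`.
-/

noncomputable def pd {n : ℕ} (i : Fin n) (f : (Fin n → ℝ) → ℝ) (x : Fin n → ℝ) : ℝ :=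
  fderiv ℝ f x (Pi.single i 1)

noncomputable def lap {n : ℕ} (f : (Fin n → ℝ) → ℝ) (x : Fin n → ℝ) : ℝ :=
  ∑ i, pd i (fun y => pd i f y) x

open Finset Filter Set

section PartialDerivatives

variable {n : ℕ} {f g : (Fin n → ℝ) → ℝ} {x : Fin n → ℝ}

lemma pd_add (i : Fin n) (hf : DifferentiableAt ℝ f x) (hg : DifferentiableAt ℝ g x) :
    pd i (fun y => f y + g y) x = pd i f x + pd i g x := by
  simp [pd, fderiv_fun_add hf hg]

lemma pd_sub (i : Fin n) (hf : DifferentiableAt ℝ f x) (hg : DifferentiableAt ℝ g x) :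
    pd i (fun y => f y - g y) x = pd i f x - pd i g x := by
  simp [pd, fderiv_fun_sub hf hg]

lemma pd_mul (i : Fin n) (hf : DifferentiableAt ℝ f x) (hg : DifferentiableAt ℝ g x) :
    pd i (fun y => f y * g y) x = pd i f x * g x + f x * pd i g x := by
  simp [pd, fderiv_fun_mul hf hg]
  ring

lemma pd_mul_const (i : Fin n) (hf : DifferentiableAt ℝ f x) (c : ℝ) :
    pd i (fun y => f y * c) x = pd i f x * c := by
  rw [pd, fderiv_mul_const hf]
  simp [pd, mul_comm]

lemma pd_const_mul (i : Fin n) (hf : DifferentiableAt ℝ f x) (c : ℝ) :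
    pd i (fun y => c * f y) x = c * pd i f x := by
  rw [pd, fderiv_const_mul hf]
  simp [pd]

lemma pd_sum {ι : Type*} (s : Finset ι) (F : ι → (Fin n → ℝ) → ℝ) (i : Fin n)
    (hF : ∀ k ∈ s, DifferentiableAt ℝ (F k) x) :
    pd i (fun y => ∑ k ∈ s, F k y) x = ∑ k ∈ s, pd i (F k) x := by
  simp [pd, fderiv_fun_sum hF]

lemma pd_comp {h : ℝ → ℝ} (i : Fin n) (hf : DifferentiableAt ℝ f x)
    (hh : DifferentiableAt ℝ h (f x)) :
    pd i (fun y => h (f y)) x = deriv h (f x) * pd i f x := by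
  rw [pd, show (fun y => h (f y)) = h ∘ f from rfl, fderiv_comp x hh hf,
    ContinuousLinearMap.comp_apply, ← toSpanSingleton_deriv,
    ContinuousLinearMap.toSpanSingleton_apply, smul_eq_mul, mul_comm, pd]

lemma contDiff_pd {m : ℕ} (hf : ContDiff ℝ (m + 1) f) (i : Fin n) : ContDiff ℝ m (pd i f) :=
  (hf.fderiv_right (by norm_cast)).clm_apply contDiff_const

lemma pd_comm (hf : ContDiff ℝ 2 f) (i j : Fin n) (x : Fin n → ℝ) :
    pd j (pd i f) x = pd i (pd j f) x := by
  have hdf : DifferentiableAt ℝ (fderiv ℝ f) x :=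
    (hf.fderiv_right (m := 1) (by norm_num)).differentiable (by norm_num) x
  have hpd : ∀ a b : Fin n, pd b (pd a f) x
      = fderiv ℝ (fderiv ℝ f) x (Pi.single b 1) (Pi.single a 1) := fun a b => by
    rw [pd, show pd a f = fun y => fderiv ℝ f y (Pi.single a 1) from rfl,
      fderiv_clm_apply hdf (differentiableAt_const _)]
    simp
  rw [hpd, hpd, (hf.contDiffAt.isSymmSndFDerivAt (by norm_num)) (Pi.single i 1)]

lemma differentiable_pd (hf : ContDiff ℝ 2 f) (i : Fin n) : Differentiable ℝ (pd i f) :=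
  (contDiff_pd (m := 1) hf i).differentiable (by norm_num)

lemma differentiable_lap (hf : ContDiff ℝ 3 f) : Differentiable ℝ (lap f) :=
  Differentiable.fun_sum fun i _ => differentiable_pd (contDiff_pd (m := 2) hf i) i

end PartialDerivatives

section VectorCalculus

variable {n : ℕ} {f a : (Fin n → ℝ) → ℝ} {x : Fin n → ℝ}

lemma sum_pd_mul_pd (ha : DifferentiableAt ℝ a x) (hf : ∀ k, DifferentiableAt ℝ (pd k f) x) :
    ∑ k, pd k (fun y => a y * pd k f y) x = ∑ k, pd k a x * pd k f x + a x * lap f x := by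
  simp only [pd_mul _ ha (hf _), sum_add_distrib, lap, mul_sum]

lemma sum_pd_comp_mul_pd {h : ℝ → ℝ} (hf : ContDiff ℝ 2 f) (hh : DifferentiableAt ℝ h (f x)) :
    ∑ k, pd k (fun y => h (f y) * pd k f y) x
      = h (f x) * lap f x + deriv h (f x) * ∑ k, pd k f x ^ 2 := by
  have hfx : DifferentiableAt ℝ f x := hf.differentiable (by norm_num) x
  rw [sum_pd_mul_pd (a := fun y => h (f y)) (hh.comp x hfx) fun k => differentiable_pd hf k x]
  simp only [pd_comp _ hfx hh, mul_sum]
  ring_nf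

lemma lap_comp {g : ℝ → ℝ} (hf : ContDiff ℝ 2 f) (hg : ∀ y, DifferentiableAt ℝ g (f y))
    (hg' : DifferentiableAt ℝ (deriv g) (f x)) :
    lap (fun y => g (f y)) x
      = deriv g (f x) * lap f x + deriv (deriv g) (f x) * ∑ k, pd k f x ^ 2 := by
  have hchain : ∀ k, pd k (fun y => g (f y)) = fun y => deriv g (f y) * pd k f y := fun k =>
    funext fun y => pd_comp k (hf.differentiable (by norm_num) y) (hg y)
  simp only [lap, hchain]
  exact sum_pd_comp_mul_pd hf hg'

lemma pd_sum_sq_pd (i : Fin n) (hf : ∀ k, DifferentiableAt ℝ (pd k f) x) :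
    pd i (fun y => ∑ k, pd k f y ^ 2) x = 2 * ∑ k, pd k f x * pd i (pd k f) x := by
  rw [pd_sum _ (fun k y => pd k f y ^ 2) i fun k _ => (hf k).pow 2, mul_sum]
  refine sum_congr rfl fun k _ => ?_
  simp only [sq, pd_mul i (hf k) (hf k)]
  ring

lemma sum_pd_mul_pd_mul_pd (i : Fin n) (hf : ContDiff ℝ 2 f) (ha : DifferentiableAt ℝ a x) :
    ∑ j, pd j (fun y => a y * pd i f y * pd j f y) x
      = pd i f x * ∑ j, pd j a x * pd j f x + a x * pd i f x * lap f x
        + a x / 2 * pd i (fun y => ∑ k, pd k f y ^ 2) x := by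
  have hpd : ∀ k, DifferentiableAt ℝ (pd k f) x := fun k => differentiable_pd hf k x
  have hterm : ∀ j, pd j (fun y => a y * pd i f y) x * pd j f x
      = pd i f x * (pd j a x * pd j f x) + a x / 2 * (2 * (pd j f x * pd i (pd j f) x)) := by
    intro j
    rw [pd_mul j ha (hpd i), pd_comm hf i j]
    ring
  rw [sum_pd_mul_pd (a := fun y => a y * pd i f y) (ha.mul (hpd i)) hpd,
    sum_congr rfl fun j _ => hterm j, sum_add_distrib, ← mul_sum, ← mul_sum, ← mul_sum,
    pd_sum_sq_pd i hpd]
  ring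

lemma sum_pd_mul_ite_sub (i : Fin n) {φ : (Fin n → ℝ) → ℝ} {ψ : Fin n → (Fin n → ℝ) → ℝ}
    (hφ : DifferentiableAt ℝ φ x) (hψ : ∀ j, DifferentiableAt ℝ (ψ j) x) :
    ∑ j, pd j (fun y => φ y * (if i = j then 1 else 0) - ψ j y) x
      = pd i φ x - ∑ j, pd j (ψ j) x := by
  have hentry : ∀ j, pd j (fun y => φ y * (if i = j then 1 else 0) - ψ j y) x
      = pd j φ x * (if i = j then 1 else 0) - pd j (ψ j) x := fun j => by
    rw [pd_sub j (hφ.mul_const _) (hψ j), pd_mul_const j hφ]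
  rw [sum_congr rfl fun j _ => hentry j, sum_sub_distrib]
  simp

end VectorCalculus

section Korteweg

variable {n : ℕ} {ρ : (Fin n → ℝ) → ℝ} {x : Fin n → ℝ}

noncomputable def kortewegTensor (κ : ℝ → ℝ) (ρ : (Fin n → ℝ) → ℝ) (y : Fin n → ℝ) :
    Matrix (Fin n) (Fin n) ℝ :=
  Matrix.of fun i j =>
    (ρ y * (∑ k, pd k (fun z => κ (ρ z) * pd k ρ z) y)
      + (1/2) * (κ (ρ y) - ρ y * deriv κ (ρ y)) * (∑ k, (pd k ρ y) ^ 2))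
      * (if i = j then 1 else 0)
    - κ (ρ y) * pd i ρ y * pd j ρ y

lemma sum_pd_kortewegTensor (i : Fin n) {κ : ℝ → ℝ} (hρ : ContDiff ℝ 3 ρ)
    (hκ : ∀ y, DifferentiableAt ℝ κ (ρ y)) (hκ' : DifferentiableAt ℝ (deriv κ) (ρ x)) :
    ∑ j, pd j (fun y => kortewegTensor κ ρ y i j) x
      = ρ x * pd i (fun y => κ (ρ y) * lap ρ y
          + (1/2) * deriv κ (ρ y) * (∑ k, (pd k ρ y) ^ 2)) x := by
  set F := fun y => κ (ρ y) * lap ρ y + (1/2) * deriv κ (ρ y) * (∑ k, (pd k ρ y) ^ 2)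
  set W := fun y => ∑ k, pd k ρ y ^ 2 with hW
  have hρ2 : ContDiff ℝ 2 ρ := hρ.of_le (by norm_num)
  have hρd : Differentiable ℝ ρ := hρ.differentiable (by norm_num)
  have hpd : ∀ k, Differentiable ℝ (pd k ρ) := differentiable_pd hρ2
  have hκρ : DifferentiableAt ℝ (fun y => κ (ρ y)) x := (hκ x).comp x (hρd x)
  have hWd : DifferentiableAt ℝ W x := by fun_prop
  have hlap : DifferentiableAt ℝ (lap ρ) x := differentiable_lap hρ x
  have hFd : DifferentiableAt ℝ F x := by fun_prop
  have hρF : DifferentiableAt ℝ (fun y => ρ y * F y) x := by fun_prop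
  have hκ2 : DifferentiableAt ℝ (fun y => 1/2 * κ (ρ y)) x := by fun_prop
  have hκW : DifferentiableAt ℝ (fun y => 1/2 * κ (ρ y) * W y) x := by fun_prop
  have hψ : ∀ j, DifferentiableAt ℝ (fun y => κ (ρ y) * pd i ρ y * pd j ρ y) x := by
    fun_prop
  have hcoeff : ∀ y, ρ y * (∑ k, pd k (fun z => κ (ρ z) * pd k ρ z) y)
        + (1/2) * (κ (ρ y) - ρ y * deriv κ (ρ y)) * (∑ k, (pd k ρ y) ^ 2)
      = ρ y * F y + (1/2) * κ (ρ y) * W y := fun y => by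
    rw [sum_pd_comp_mul_pd hρ2 (hκ y)]
    ring
  have hgradκ : ∑ j, pd j (fun y => κ (ρ y)) x * pd j ρ x = deriv κ (ρ x) * W x := by
    simp only [pd_comp _ (hρd x) (hκ x), hW, mul_sum]
    ring_nf
  simp only [kortewegTensor, Matrix.of_apply, hcoeff]
  rw [sum_pd_mul_ite_sub i (hρF.fun_add hκW) hψ, sum_pd_mul_pd_mul_pd i hρ2 hκρ, hgradκ,
    pd_add i hρF hκW, pd_mul i (hρd x) hFd, pd_mul i hκ2 hWd, pd_const_mul i hκρ,
    pd_comp i (hρd x) (hκ x)]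
  ring

lemma sqrt_mul_lap_comp_of_deriv_eq_sqrt {K G : ℝ → ℝ} (hρ : ContDiff ℝ 2 ρ)
    (hρpos : ∀ y, 0 < ρ y) (hK : DifferentiableAt ℝ K (ρ x)) (hKpos : ∀ r > (0:ℝ), 0 < K r)
    (hG : ∀ r > (0:ℝ), deriv G r = Real.sqrt (K r)) :
    Real.sqrt (K (ρ x)) * lap (fun y => G (ρ y)) x
      = K (ρ x) * lap ρ x + (1/2) * deriv K (ρ x) * (∑ k, (pd k ρ x) ^ 2) := by
  -- `deriv G = 0` wherever `G` is not differentiable, so `deriv G = √K > 0` forces it.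
  have hGd : ∀ y, DifferentiableAt ℝ G (ρ y) := fun y =>
    differentiableAt_of_deriv_ne_zero <| by
      rw [hG _ (hρpos y)]
      exact (Real.sqrt_pos.2 (hKpos _ (hρpos y))).ne'
  have hKx : K (ρ x) ≠ 0 := (hKpos _ (hρpos x)).ne'
  have hG' : HasDerivAt (deriv G) (deriv K (ρ x) / (2 * Real.sqrt (K (ρ x)))) (ρ x) :=
    (hK.hasDerivAt.sqrt hKx).congr_of_eventuallyEq <|
      eventually_of_mem (Ioi_mem_nhds (hρpos x)) hG
  have hsqrt : Real.sqrt (K (ρ x)) ≠ 0 := Real.sqrt_ne_zero'.2 (hKpos _ (hρpos x))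
  rw [lap_comp hρ hGd hG'.differentiableAt, hG'.deriv, hG _ (hρpos x)]
  field_simp
  rw [Real.sq_sqrt (hKpos _ (hρpos x)).le]
  ring

end Korteweg

theorem korteweg_tensor_divergence_general {n : ℕ}
    (ρ : (Fin n → ℝ) → ℝ) (K G : ℝ → ℝ)
    (hρ : ContDiff ℝ 3 ρ) (hρpos : ∀ x, 0 < ρ x)
    (hK : ContDiffOn ℝ 2 K (Set.Ioi 0)) (hKpos : ∀ r > (0:ℝ), 0 < K r)
    (hG : ∀ r > (0:ℝ), deriv G r = Real.sqrt (K r))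
    (M : (Fin n → ℝ) → Matrix (Fin n) (Fin n) ℝ)
    (hM : ∀ x i j, M x i j =
      (ρ x * (∑ k, pd k (fun y => K (ρ y) * pd k ρ y) x)
        + (1/2) * (K (ρ x) - ρ x * deriv K (ρ x)) * (∑ k, (pd k ρ x) ^ 2))
        * (if i = j then 1 else 0)
      - K (ρ x) * pd i ρ x * pd j ρ x) :
    ∀ (x : Fin n → ℝ) (i : Fin n),
      (∑ j, pd j (fun y => M y i j) x)
        = ρ x * pd i (fun y => Real.sqrt (K (ρ y)) * lap (fun z => G (ρ z)) y) x
      ∧ (∑ j, pd j (fun y => M y i j) x)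
        = ρ x * pd i (fun y => K (ρ y) * lap ρ y
            + (1/2) * deriv K (ρ y) * (∑ k, (pd k ρ y) ^ 2)) x := by
  intro x i
  have hKd : ∀ y, DifferentiableAt ℝ K (ρ y) := fun y =>
    hK.differentiableOn (by norm_num) |>.differentiableAt (Ioi_mem_nhds (hρpos y))
  have hK'd : DifferentiableAt ℝ (deriv K) (ρ x) :=
    (hK.deriv_of_isOpen (m := 1) isOpen_Ioi (by norm_num)).differentiableOn (by norm_num)
      |>.differentiableAt (Ioi_mem_nhds (hρpos x))
  have hdiv : ∑ j, pd j (fun y => M y i j) x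
      = ρ x * pd i (fun y => K (ρ y) * lap ρ y
          + (1/2) * deriv K (ρ y) * (∑ k, (pd k ρ y) ^ 2)) x := by
    have hMK : M = kortewegTensor K ρ := funext fun y => Matrix.ext (hM y)
    exact hMK ▸ sum_pd_kortewegTensor i hρ hKd hK'd
  have hsqrt : (fun y => Real.sqrt (K (ρ y)) * lap (fun z => G (ρ z)) y)
      = fun y => K (ρ y) * lap ρ y + (1/2) * deriv K (ρ y) * (∑ k, (pd k ρ y) ^ 2) :=
    funext fun y => sqrt_mul_lap_comp_of_deriv_eq_sqrt (hρ.of_le (by norm_num)) hρpos (hKd y)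
      hKpos hG
  exact ⟨hsqrt ▸ hdiv, hdiv⟩

/-- Divergence of the Korteweg stress tensor
`𝐊 = (ρ div(K(ρ)∇ρ) + ½(K(ρ)−ρK'(ρ))|∇ρ|²) I − K(ρ)∇ρ⊗∇ρ`:
`div 𝐊 = ρ∇(√(K(ρ))Δ(G(ρ))) = ρ∇(K(ρ)Δρ + ½K'(ρ)|∇ρ|²)` (row-wise divergence). -/
theorem korteweg_tensor_divergence {n : ℕ}
    (ρ : (Fin n → ℝ) → ℝ) (K G : ℝ → ℝ)
    (hρ : ContDiff ℝ 3 ρ) (hρpos : ∀ x, 0 < ρ x)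
    (hK : ContDiffOn ℝ 2 K (Set.Ioi 0)) (hKpos : ∀ r > (0:ℝ), 0 < K r)
    (hG : ∀ r > (0:ℝ), deriv G r = Real.sqrt (K r))
    (hG3 : ContDiffOn ℝ 3 G (Set.Ioi 0))
    (M : (Fin n → ℝ) → Matrix (Fin n) (Fin n) ℝ)
    (hM : ∀ x i j, M x i j =
      (ρ x * (∑ k, pd k (fun y => K (ρ y) * pd k ρ y) x)
        + (1/2) * (K (ρ x) - ρ x * deriv K (ρ x)) * (∑ k, (pd k ρ x) ^ 2))
        * (if i = j then 1 else 0)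
      - K (ρ x) * pd i ρ x * pd j ρ x) :
    ∀ (x : Fin n → ℝ) (i : Fin n),
      (∑ j, pd j (fun y => M y i j) x)
        = ρ x * pd i (fun y => Real.sqrt (K (ρ y)) * lap (fun z => G (ρ z)) y) x
      ∧ (∑ j, pd j (fun y => M y i j) x)
        = ρ x * pd i (fun y => K (ρ y) * lap ρ y
            + (1/2) * deriv K (ρ y) * (∑ k, (pd k ρ y) ^ 2)) x :=
  korteweg_tensor_divergence_general ρ K G hρ hρpos hK hKpos hG M hM
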